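/- Let n ≥ 1. Let A be an n×(n−1) spin matrix with guard qubits a_{i,−1} = +1 and a_{i,n−1} = −1, let B be an (n−1)×n spin matrix with guard qubits b_{−1,j} = +1 and b_{n−1,j} = −1, and let S = (s_{i,j}) be an n×n spin matrix. Define Δa_{i,j} = a_{i,j−1} − a_{i,j} and Δb_{i,j} = b_{i−1,j} − b_{i,j} for 0 ≤ i, j ≤ n−1. Then the Hamiltonian H_e^{nn}(A,B,S) = (1/2)·Σ_{i,j} (Δa_{i,j})^2 + (1/2)·Σ_{i,j} (Δb_{i,j})^2 + (1/2)·Σ_{i,j} ((s_{i,j}+1) − Δa_{i,j})^2 + (1/2)·Σ_{i,j} ((s_{i,j}+1) − Δb_{i,j})^2 satisfies H_e^{nn}(A,B,S) ≥ 4n, and H_e^{nn}(A,B,S) = 4n if and only if every guard-extended row of A is a spin domain-wall vector, every guard-extended column of B is a spin domain-wall vector, Δa_{i,j} = Δb_{i,j} for all i, j, and s_{i,j} + 1 = Δa_{i,j} for all i, j. -/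

import Mathlib

/-- Guard-extended row of the spin matrix `A` (rows of length `n-1`, guard qubits
`a_{i,-1} = +1` at shifted index `0` and `a_{i,n-1} = -1` at shifted index `n`). -/
def gA (n : ℕ) (A : ℕ → ℕ → ℤ) (i j : ℕ) : ℤ :=
  if j = 0 then 1 else if j < n then A i (j - 1) else -1

/-- `Δa_{i,j} = a_{i,j-1} - a_{i,j}` computed on the guard-extended rows of `A`. -/
def dA (n : ℕ) (A : ℕ → ℕ → ℤ) (i j : ℕ) : ℤ := gA n A i j - gA n A i (j + 1)

/-- Guard-extended column of the spin matrix `B` (columns of length `m-1`, guard qubits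
`b_{-1,j} = +1` at shifted index `0` and `b_{m-1,j} = -1` at shifted index `m`). -/
def gB (m : ℕ) (B : ℕ → ℕ → ℤ) (i j : ℕ) : ℤ :=
  if i = 0 then 1 else if i < m then B (i - 1) j else -1

/-- `Δb_{i,j} = b_{i-1,j} - b_{i,j}` computed on the guard-extended columns of `B`. -/
def dB (m : ℕ) (B : ℕ → ℕ → ℤ) (i j : ℕ) : ℤ := gB m B i j - gB m B (i + 1) j

/-- Row domain-wall condition: every guard-extended row of the `m × (n-1)` spin matrix `A`
is a spin domain-wall vector. -/
def RowDW (m n : ℕ) (A : ℕ → ℕ → ℤ) : Prop :=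
  ∀ i < m, ∃ t ≤ n - 1, ∀ j < n - 1, (j < t → A i j = 1) ∧ (t ≤ j → A i j = -1)

/-- Column domain-wall condition: every guard-extended column of the `(m-1) × n` spin
matrix `B` is a spin domain-wall vector. -/
def ColDW (m n : ℕ) (B : ℕ → ℕ → ℤ) : Prop :=
  ∀ j < n, ∃ t ≤ m - 1, ∀ i < m - 1, (i < t → B i j = 1) ∧ (t ≤ i → B i j = -1)

/-- The extended dual-matrix domain-wall Ising Hamiltonian
`H_eⁿⁿ(A,B,S) = ½ ΣΣ (Δa)² + ½ ΣΣ (Δb)² + ½ ΣΣ ((s+1) - Δa)² + ½ ΣΣ ((s+1) - Δb)²`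
over `0 ≤ i, j ≤ n-1`. -/
def He (n : ℕ) (A B S : ℕ → ℕ → ℤ) : ℚ :=
  (1 / 2 : ℚ) * ∑ i ∈ Finset.range n, ∑ j ∈ Finset.range n, (dA n A i j : ℚ) ^ 2 +
  (1 / 2 : ℚ) * ∑ i ∈ Finset.range n, ∑ j ∈ Finset.range n, (dB n B i j : ℚ) ^ 2 +
  (1 / 2 : ℚ) * ∑ i ∈ Finset.range n, ∑ j ∈ Finset.range n,
    (((S i j : ℚ) + 1) - (dA n A i j : ℚ)) ^ 2 +
  (1 / 2 : ℚ) * ∑ i ∈ Finset.range n, ∑ j ∈ Finset.range n,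
    (((S i j : ℚ) + 1) - (dB n B i j : ℚ)) ^ 2

/-!
Along a guard-extended row every step `Δ = g j - g (j+1)` of a `±1` sequence lies in
`{-2, 0, 2}`, so `Δ² = 2|Δ|`, while the steps telescope to `(+1) - (-1) = 2`. Hence a row
contributes `∑ Δ² = 4 + 2 ∑ (|Δ| - Δ) ≥ 4`, with equality iff no step is negative, i.e. iff
the row is antitone, which for a `±1` row with these guards means it is a domain wall. The
columns of `B` are the rows of its transpose, and the two mismatch sums are sums of squares,
vanishing iff `s + 1 = Δa = Δb` everywhere. Adding up `n` rows and `n` columns gives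
`2 H ≥ 8 n`.
-/

open Finset

lemma sq_sub_eq_two_mul_abs_sub_of_spin {a b : ℤ} (ha : a = 1 ∨ a = -1) (hb : b = 1 ∨ b = -1) :
    (a - b) ^ 2 = 2 * |a - b| := by
  rcases ha with rfl | rfl <;> rcases hb with rfl | rfl <;> decide

section SpinSequence

variable {g : ℕ → ℤ}

lemma sum_range_sq_sub_succ_of_spin (hg : ∀ j, g j = 1 ∨ g j = -1) (n : ℕ) :
    ∑ j ∈ range n, (g j - g (j + 1)) ^ 2 =
      2 * (g 0 - g n) + 2 * ∑ j ∈ range n, (|g j - g (j + 1)| - (g j - g (j + 1))) := by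
  rw [← sum_range_sub' g n, mul_sum, mul_sum, ← sum_add_distrib]
  refine sum_congr rfl fun j _ => ?_
  rw [sq_sub_eq_two_mul_abs_sub_of_spin (hg _) (hg _)]
  ring

lemma four_le_sum_range_sq_sub_succ_of_spin {n : ℕ} (hg : ∀ j, g j = 1 ∨ g j = -1)
    (h0 : g 0 = 1) (hn : g n = -1) :
    4 ≤ ∑ j ∈ range n, (g j - g (j + 1)) ^ 2 := by
  have : 0 ≤ ∑ j ∈ range n, (|g j - g (j + 1)| - (g j - g (j + 1))) :=
    sum_nonneg fun j _ => sub_nonneg.mpr (le_abs_self _)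
  rw [sum_range_sq_sub_succ_of_spin hg, h0, hn]
  linarith

lemma sum_range_sq_sub_succ_eq_four_iff_of_spin {n : ℕ} (hg : ∀ j, g j = 1 ∨ g j = -1)
    (h0 : g 0 = 1) (hn : g n = -1) :
    ∑ j ∈ range n, (g j - g (j + 1)) ^ 2 = 4 ↔ ∀ j < n, g (j + 1) ≤ g j := by
  rw [sum_range_sq_sub_succ_of_spin hg, h0, hn,
    show ∀ x : ℤ, 2 * (1 - -1) + 2 * x = 4 ↔ x = 0 by intro x; omega,
    sum_eq_zero_iff_of_nonneg fun j _ => sub_nonneg.mpr (le_abs_self _)]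
  simp only [mem_range, sub_eq_zero, abs_eq_self, sub_nonneg]

end SpinSequence

section GuardedRow

variable {n : ℕ} {A : ℕ → ℕ → ℤ} {i : ℕ}

lemma gA_zero : gA n A i 0 = 1 := rfl

lemma gA_succ {j : ℕ} (hj : j + 1 < n) : gA n A i (j + 1) = A i j := by
  simp [gA, hj]

lemma gA_of_le {j : ℕ} (hn : 0 < n) (hj : n ≤ j) : gA n A i j = -1 := by
  rw [gA, if_neg (by omega), if_neg (by omega)]

lemma gA_spin (hA : ∀ j < n - 1, A i j = -1 ∨ A i j = 1) (j : ℕ) :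
    gA n A i j = 1 ∨ gA n A i j = -1 := by
  unfold gA
  split_ifs
  · exact .inl rfl
  · exact (hA (j - 1) (by omega)).symm
  · exact .inr rfl

lemma antitone_gA_iff : Antitone (gA n A i) ↔ ∀ j < n, gA n A i (j + 1) ≤ gA n A i j := by
  refine ⟨fun h j _ => h j.le_succ, fun h => antitone_nat_of_succ_le fun j => ?_⟩
  by_cases hj : j < n
  · exact h j hj
  · rw [gA, gA, if_neg j.succ_ne_zero, if_neg (by omega), if_neg hj]
    split_ifs <;> norm_num

lemma rowDW_iff_forall_antitone_gA {m : ℕ}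
    (hA : ∀ i < m, ∀ j < n - 1, A i j = -1 ∨ A i j = 1) :
    RowDW m n A ↔ ∀ i < m, Antitone (gA n A i) := by
  refine forall₂_congr fun i hi => ⟨?_, fun hanti => ?_⟩
  · rintro ⟨t, ht, hwall⟩
    have hstep : gA n A i = fun k => if k ≤ t then 1 else -1 := by
      funext k
      unfold gA
      split_ifs <;> first
        | rfl | omega
        | exact (hwall (k - 1) (by omega)).1 (by omega)
        | exact (hwall (k - 1) (by omega)).2 (by omega)
    rw [hstep]
    intro a b hab
    dsimp only
    split_ifs <;> omega
  · have hlast : gA n A i (n - 1 + 1) = -1 := by unfold gA; split_ifs <;> omega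
    have hex : ∃ j, gA n A i (j + 1) = -1 := ⟨n - 1, hlast⟩
    refine ⟨Nat.find hex, Nat.find_min' hex hlast, fun j hj => ?_⟩
    rw [← gA_succ (n := n) (A := A) (i := i) (j := j) (by omega)]
    refine ⟨fun hjt => ?_, fun hjt => ?_⟩
    · exact (gA_spin (hA i hi) _).resolve_right (Nat.find_min hex hjt)
    · have := hanti (show Nat.find hex + 1 ≤ j + 1 by omega)
      rw [Nat.find_spec hex] at this
      rcases gA_spin (hA i hi) (j + 1) with h | h <;> omega

lemma four_le_sum_sq_dA (hn : 0 < n) (hA : ∀ j < n - 1, A i j = -1 ∨ A i j = 1) :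
    4 ≤ ∑ j ∈ range n, dA n A i j ^ 2 :=
  four_le_sum_range_sq_sub_succ_of_spin (gA_spin hA) gA_zero (gA_of_le hn le_rfl)

lemma sum_sq_dA_eq_four_iff (hn : 0 < n) (hA : ∀ j < n - 1, A i j = -1 ∨ A i j = 1) :
    ∑ j ∈ range n, dA n A i j ^ 2 = 4 ↔ Antitone (gA n A i) :=
  (sum_range_sq_sub_succ_eq_four_iff_of_spin (gA_spin hA) gA_zero (gA_of_le hn le_rfl)).trans
    antitone_gA_iff.symm

end GuardedRow

lemma sum_range_eq_mul_iff_of_le {n : ℕ} {c : ℤ} {f : ℕ → ℤ} (h : ∀ i < n, c ≤ f i) :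
    ∑ i ∈ range n, f i = n * c ↔ ∀ i < n, f i = c := by
  have := sum_eq_sum_iff_of_le (s := range n) (f := fun _ => c) (g := f)
    fun i hi => h i (mem_range.mp hi)
  simp only [sum_const, card_range, nsmul_eq_mul, mem_range] at this
  rw [eq_comm, this]
  exact forall₂_congr fun _ _ => eq_comm

section Energy

variable {n : ℕ} {A : ℕ → ℕ → ℤ}

lemma four_mul_le_sum_sum_sq_dA (hA : ∀ i < n, ∀ j < n - 1, A i j = -1 ∨ A i j = 1) :
    4 * n ≤ ∑ i ∈ range n, ∑ j ∈ range n, dA n A i j ^ 2 := by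
  have := card_nsmul_le_sum (range n) _ 4 fun i hi =>
    four_le_sum_sq_dA (Nat.zero_lt_of_lt (mem_range.mp hi)) (hA i (mem_range.mp hi))
  simpa [mul_comm] using this

lemma sum_sum_sq_dA_eq_iff (hA : ∀ i < n, ∀ j < n - 1, A i j = -1 ∨ A i j = 1) :
    ∑ i ∈ range n, ∑ j ∈ range n, dA n A i j ^ 2 = 4 * n ↔ RowDW n n A := by
  rw [mul_comm, sum_range_eq_mul_iff_of_le fun i hi => four_le_sum_sq_dA (by omega) (hA i hi),
    rowDW_iff_forall_antitone_gA hA]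
  exact forall₂_congr fun i hi => sum_sq_dA_eq_four_iff (by omega) (hA i hi)

end Energy

lemma sum_sum_sq_eq_zero_iff {n : ℕ} (f : ℕ → ℕ → ℤ) :
    ∑ i ∈ range n, ∑ j ∈ range n, f i j ^ 2 = 0 ↔ ∀ i < n, ∀ j < n, f i j = 0 := by
  rw [sum_eq_zero_iff_of_nonneg fun i _ => sum_nonneg fun j _ => sq_nonneg _]
  simp only [mem_range]
  refine forall₂_congr fun i _ => ?_
  rw [sum_eq_zero_iff_of_nonneg fun j _ => sq_nonneg _]
  simp

theorem extended_dual_matrix_hamiltonian_general (n : ℕ) (A B S : ℕ → ℕ → ℤ)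
    (hA : ∀ i < n, ∀ j < n - 1, A i j = -1 ∨ A i j = 1)
    (hB : ∀ i < n - 1, ∀ j < n, B i j = -1 ∨ B i j = 1) :
    (4 * n : ℚ) ≤ He n A B S ∧
    (He n A B S = 4 * n ↔
      RowDW n n A ∧ ColDW n n B ∧
      (∀ i < n, ∀ j < n, dA n A i j = dB n B i j) ∧
      (∀ i < n, ∀ j < n, S i j + 1 = dA n A i j)) := by
  -- the columns of `B` are the guarded rows of its transpose
  set Bt : ℕ → ℕ → ℤ := fun j i => B i j
  have hBt : ∀ j < n, ∀ i < n - 1, Bt j i = -1 ∨ Bt j i = 1 := fun j hj i hi => hB i hi j hj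
  set T₁ := ∑ i ∈ range n, ∑ j ∈ range n, dA n A i j ^ 2
  set T₂ := ∑ j ∈ range n, ∑ i ∈ range n, dA n Bt j i ^ 2
  set T₃ := ∑ i ∈ range n, ∑ j ∈ range n, (S i j + 1 - dA n A i j) ^ 2
  set T₄ := ∑ i ∈ range n, ∑ j ∈ range n, (S i j + 1 - dB n B i j) ^ 2
  have hHe : He n A B S = ((T₁ + T₂ + T₃ + T₄ : ℤ) : ℚ) / 2 := by
    have hdB : ∀ i j, dB n B i j = dA n Bt j i := fun _ _ => rfl
    rw [He, sum_comm (s := range n) (t := range n) (f := fun i j => (dB n B i j : ℚ) ^ 2)]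
    simp only [T₁, T₂, T₃, T₄, hdB]
    push_cast
    ring
  have h₁ : 4 * n ≤ T₁ := four_mul_le_sum_sum_sq_dA hA
  have h₂ : 4 * n ≤ T₂ := four_mul_le_sum_sum_sq_dA hBt
  have h₃ : 0 ≤ T₃ := by positivity
  have h₄ : 0 ≤ T₄ := by positivity
  have hsplit : T₁ + T₂ + T₃ + T₄ = 8 * n ↔ T₁ = 4 * n ∧ T₂ = 4 * n ∧ T₃ = 0 ∧ T₄ = 0 := by
    omega
  refine ⟨?_, ?_⟩
  · rw [hHe, le_div_iff₀ two_pos]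
    exact_mod_cast (by omega : 4 * n * 2 ≤ T₁ + T₂ + T₃ + T₄)
  · rw [hHe, div_eq_iff two_ne_zero,
      show (4 * n * 2 : ℚ) = ((8 * n : ℤ) : ℚ) by push_cast; ring, Int.cast_inj, hsplit,
      sum_sum_sq_dA_eq_iff hA, sum_sum_sq_dA_eq_iff hBt, sum_sum_sq_eq_zero_iff,
      sum_sum_sq_eq_zero_iff]
    simp only [sub_eq_zero]
    refine and_congr_right' (and_congr_right' ⟨?_, ?_⟩)
    · rintro ⟨hSA, hSB⟩
      exact ⟨fun i hi j hj => (hSA i hi j hj).symm.trans (hSB i hi j hj), hSA⟩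
    · rintro ⟨hAB, hSA⟩
      exact ⟨hSA, fun i hi j hj => (hSA i hi j hj).trans (hAB i hi j hj)⟩

/-- For an `n × (n-1)` spin matrix `A`, an `(n-1) × n` spin matrix `B` (with guard qubits)
and an `n × n` spin matrix `S`, the Hamiltonian `H_eⁿⁿ(A,B,S)` is at least `4n`, and
equals `4n` iff every guard-extended row of `A` is a spin domain-wall vector, every
guard-extended column of `B` is a spin domain-wall vector, `Δa_{i,j} = Δb_{i,j}` for all
`i, j`, and `s_{i,j} + 1 = Δa_{i,j}` for all `i, j`. -/
theorem extended_dual_matrix_hamiltonian (n : ℕ) (hn : 1 ≤ n) (A B S : ℕ → ℕ → ℤ)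
    (hA : ∀ i < n, ∀ j < n - 1, A i j = -1 ∨ A i j = 1)
    (hB : ∀ i < n - 1, ∀ j < n, B i j = -1 ∨ B i j = 1)
    (hS : ∀ i < n, ∀ j < n, S i j = -1 ∨ S i j = 1) :
    (4 * n : ℚ) ≤ He n A B S ∧
    (He n A B S = 4 * n ↔
      RowDW n n A ∧ ColDW n n B ∧
      (∀ i < n, ∀ j < n, dA n A i j = dB n B i j) ∧
      (∀ i < n, ∀ j < n, S i j + 1 = dA n A i j)) :=
  extended_dual_matrix_hamiltonian_general n A B S hA hB
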